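/- arXiv:2310.12613 — 3 statements merged into one kernel-verified Lean document; each statement's English description precedes it below -/
import Mathlib

section
/- (Contextual Equivalence Lemma) Let φ be an LTL formula and (B,≺) a finite well-founded basis. Assume that for every C ⊆ B there is a formula φ_C with (i) φ and φ_C equivalent under context ⟨C,B⟩ and (ii) C ⊆ C' implies φ_C ⊨ φ_{C'}. Assume further that for every basis formula ψ ∈ B and every D ⊆ ⇓ψ there is a formula ψ_D with (iii) ψ and ψ_D equivalent under context ⟨D,⇓ψ⟩ and (iv) D ⊆ D' ⊆ ⇓ψ implies ψ_D ⊨ ψ_{D'}. Then φ ≡ ⋁_{C ⊆ B} ( φ_C ∧ ⋀_{ψ ∈ C} ψ_{C ∩ ⇓ψ} ). -/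
namespace LTLNorm

/-- LTL formulas in negation normal form. -/
inductive F (Ap : Type) : Type
  | tt    : F Ap
  | ff    : F Ap
  | pos   : Ap → F Ap
  | nlit  : Ap → F Ap
  | and   : F Ap → F Ap → F Ap
  | or    : F Ap → F Ap → F Ap
  | next  : F Ap → F Ap
  | untl  : F Ap → F Ap → F Ap
  | wuntl : F Ap → F Ap → F Ap
  | rel   : F Ap → F Ap → F Ap
  | srel  : F Ap → F Ap → F Ap
  deriving DecidableEq

/-- Infinite words over the alphabet `2^Ap`. -/
abbrev Word (Ap : Type) := ℕ → Set Ap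

/-- Suffix of a word starting at position `i`. -/
def suff {Ap : Type} (w : Word Ap) (i : ℕ) : Word Ap := fun n => w (n + i)

/-- Satisfaction relation. -/
def Sat {Ap : Type} : Word Ap → F Ap → Prop
  | _, F.tt => True
  | _, F.ff => False
  | w, F.pos a => a ∈ w 0
  | w, F.nlit a => a ∉ w 0
  | w, F.and φ ψ => Sat w φ ∧ Sat w ψ
  | w, F.or φ ψ => Sat w φ ∨ Sat w ψ
  | w, F.next φ => Sat (suff w 1) φ
  | w, F.untl φ ψ => ∃ k, Sat (suff w k) ψ ∧ ∀ j < k, Sat (suff w j) φ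
  | w, F.wuntl φ ψ => (∀ k, Sat (suff w k) φ) ∨ ∃ k, Sat (suff w k) ψ ∧ ∀ j < k, Sat (suff w j) φ
  | w, F.srel φ ψ => ∃ k, Sat (suff w k) φ ∧ ∀ j ≤ k, Sat (suff w j) ψ
  | w, F.rel φ ψ => (∀ k, Sat (suff w k) ψ) ∨ ∃ k, Sat (suff w k) φ ∧ ∀ j ≤ k, Sat (suff w j) ψ

/-- Equivalence of formulas. -/
def Equiv {Ap : Type} (φ ψ : F Ap) : Prop := ∀ w : Word Ap, Sat w φ ↔ Sat w ψ

/-- Entailment: every word satisfying `φ` satisfies `ψ`. -/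
def Entails {Ap : Type} (φ ψ : F Ap) : Prop := ∀ w : Word Ap, Sat w φ → Sat w ψ

/-- F φ := tt U φ -/
def Ff {Ap : Type} (φ : F Ap) : F Ap := F.untl F.tt φ
/-- G φ := φ W ff -/
def Gf {Ap : Type} (φ : F Ap) : F Ap := F.wuntl φ F.ff
/-- GF φ := G (F φ) -/
def GFf {Ap : Type} (φ : F Ap) : F Ap := Gf (Ff φ)
/-- FG φ := F (G φ) -/
def FGf {Ap : Type} (φ : F Ap) : F Ap := Ff (Gf φ)

/-- Number of nodes of the syntax tree. -/
def size {Ap : Type} : F Ap → ℕ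
  | F.tt => 1
  | F.ff => 1
  | F.pos _ => 1
  | F.nlit _ => 1
  | F.and φ ψ => size φ + size ψ + 1
  | F.or φ ψ => size φ + size ψ + 1
  | F.next φ => size φ + 1
  | F.untl φ ψ => size φ + size ψ + 1
  | F.wuntl φ ψ => size φ + size ψ + 1
  | F.rel φ ψ => size φ + size ψ + 1
  | F.srel φ ψ => size φ + size ψ + 1

/-- The dual of a formula in negation normal form. -/
def dual {Ap : Type} : F Ap → F Ap
  | F.tt => F.ff
  | F.ff => F.tt
  | F.pos a => F.nlit a
  | F.nlit a => F.pos a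
  | F.and φ ψ => F.or (dual φ) (dual ψ)
  | F.or φ ψ => F.and (dual φ) (dual ψ)
  | F.next φ => F.next (dual φ)
  | F.untl φ ψ => F.rel (dual φ) (dual ψ)
  | F.rel φ ψ => F.untl (dual φ) (dual ψ)
  | F.wuntl φ ψ => F.srel (dual φ) (dual ψ)
  | F.srel φ ψ => F.wuntl (dual φ) (dual ψ)

/-- `LangC B C` is the set of words satisfying every formula of `C` and
no formula of `B \ C` (the language of the context `⟨C,B⟩`). -/
def LangC {Ap : Type} (B C : Finset (F Ap)) : Set (Word Ap) :=
  {w | (∀ ψ ∈ C, Sat w ψ) ∧ ∀ ψ ∈ B, ψ ∉ C → ¬ Sat w ψ}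

/-- Equivalence under the context `⟨C,B⟩`. -/
def EquivUnder {Ap : Type} (B C : Finset (F Ap)) (φ₁ φ₂ : F Ap) : Prop :=
  ∀ w ∈ LangC B C, (Sat w φ₁ ↔ Sat w φ₂)

/-- Disjunction of a list of formulas. -/
def bigOr {Ap : Type} (l : List (F Ap)) : F Ap := l.foldr F.or F.ff

/-- Conjunction of a list of formulas. -/
def bigAnd {Ap : Type} (l : List (F Ap)) : F Ap := l.foldr F.and F.tt

open Classical in
/-- `⇓ψ` relative to a basis `B` and an order `≺`. -/
noncomputable def downRel {Ap : Type} [DecidableEq Ap] (B : Finset (F Ap))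
    (prec : F Ap → F Ap → Prop) (ψ : F Ap) : Finset (F Ap) :=
  B.filter fun χ => prec χ ψ

/-!
A word `w` determines its own context `C_w = {ψ ∈ B | w ⊨ ψ}`, and `w ∈ L(C_w | B)`; likewise
`C_w ∩ ⇓ψ` is its context in `⇓ψ`. So if `w ⊨ φ`, then `w` satisfies the disjunct for `C_w`.
Conversely, if `w` satisfies the disjunct for some `C ⊆ B`, well-founded induction along `≺`
shows `C ⊆ C_w`: for `ψ ∈ C` the induction hypothesis gives `C ∩ ⇓ψ ⊆ C_w ∩ ⇓ψ`, so by
monotonicity `w ⊨ ψ_{C_w ∩ ⇓ψ}`, which is equivalent to `ψ` in the context of `w`.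
Monotonicity of `C ↦ φ_C` then gives `w ⊨ φ_{C_w}`, hence `w ⊨ φ`.
-/

section

variable {Ap : Type}

lemma sat_bigOr_map {α : Type*} (w : Word Ap) (s : Finset α) (h : α → F Ap) :
    Sat w (bigOr (s.toList.map h)) ↔ ∃ x ∈ s, Sat w (h x) := by
  suffices ∀ l : List α, Sat w (bigOr (l.map h)) ↔ ∃ x ∈ l, Sat w (h x) by
    simpa using this s.toList
  intro l
  induction l with
  | nil => simp [bigOr, Sat]
  | cons a t ih => simp_all [bigOr, Sat]

lemma sat_bigAnd_map {α : Type*} (w : Word Ap) (s : Finset α) (h : α → F Ap) :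
    Sat w (bigAnd (s.toList.map h)) ↔ ∀ x ∈ s, Sat w (h x) := by
  suffices ∀ l : List α, Sat w (bigAnd (l.map h)) ↔ ∀ x ∈ l, Sat w (h x) by
    simpa using this s.toList
  intro l
  induction l with
  | nil => simp [bigAnd, Sat]
  | cons a t ih => simp_all [bigAnd, Sat]

open Classical in
noncomputable def satisfiedIn (B : Finset (F Ap)) (w : Word Ap) : Finset (F Ap) :=
  B.filter fun ψ => Sat w ψ

open Classical in
lemma mem_satisfiedIn {B : Finset (F Ap)} {w : Word Ap} {ψ : F Ap} :
    ψ ∈ satisfiedIn B w ↔ ψ ∈ B ∧ Sat w ψ :=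
  Finset.mem_filter

lemma satisfiedIn_subset (B : Finset (F Ap)) (w : Word Ap) : satisfiedIn B w ⊆ B :=
  fun _ hψ => (mem_satisfiedIn.mp hψ).1

lemma mem_langC_satisfiedIn (B : Finset (F Ap)) (w : Word Ap) : w ∈ LangC B (satisfiedIn B w) :=
  ⟨fun _ hψ => (mem_satisfiedIn.mp hψ).2, fun _ hψ hn hs => hn (mem_satisfiedIn.mpr ⟨hψ, hs⟩)⟩

lemma satisfiedIn_inter_of_subset [DecidableEq Ap] {B D : Finset (F Ap)} (hD : D ⊆ B)
    (w : Word Ap) : satisfiedIn B w ∩ D = satisfiedIn D w := by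
  ext ψ
  simp only [Finset.mem_inter, mem_satisfiedIn]
  exact ⟨fun ⟨⟨_, hw⟩, hψ⟩ => ⟨hψ, hw⟩, fun ⟨hψ, hw⟩ => ⟨⟨hD hψ, hw⟩, hψ⟩⟩

open Classical in
lemma mem_downRel [DecidableEq Ap] {B : Finset (F Ap)} {prec : F Ap → F Ap → Prop}
    {ψ χ : F Ap} : χ ∈ downRel B prec ψ ↔ χ ∈ B ∧ prec χ ψ :=
  Finset.mem_filter

lemma downRel_subset [DecidableEq Ap] (B : Finset (F Ap)) (prec : F Ap → F Ap → Prop)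
    (ψ : F Ap) : downRel B prec ψ ⊆ B :=
  fun _ hχ => (mem_downRel.mp hχ).1

lemma subset_satisfiedIn_of_sat_refinements [DecidableEq Ap] {B C : Finset (F Ap)}
    {prec : F Ap → F Ap → Prop} {g : F Ap → Finset (F Ap) → F Ap} {w : Word Ap}
    (hwf : (↑B : Set (F Ap)).WellFoundedOn prec)
    (h3 : ∀ ψ ∈ B, ∀ D ⊆ downRel B prec ψ, EquivUnder (downRel B prec ψ) D ψ (g ψ D))
    (h4 : ∀ ψ ∈ B, ∀ D D' : Finset (F Ap), D ⊆ D' → D' ⊆ downRel B prec ψ →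
      Entails (g ψ D) (g ψ D'))
    (hCB : C ⊆ B) (hg : ∀ ψ ∈ C, Sat w (g ψ (C ∩ downRel B prec ψ))) :
    C ⊆ satisfiedIn B w := by
  suffices hsat : ∀ ψ ∈ B, ψ ∈ C → Sat w ψ from
    fun ψ hψC => mem_satisfiedIn.mpr ⟨hCB hψC, hsat ψ (hCB hψC) hψC⟩
  intro ψ hψB
  refine hwf.induction (P := fun ψ => ψ ∈ C → Sat w ψ) hψB fun ψ hψB ih hψC => ?_
  have hdown : C ∩ downRel B prec ψ ⊆ satisfiedIn (downRel B prec ψ) w := by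
    intro χ hχ
    obtain ⟨hχC, hχdown⟩ := Finset.mem_inter.mp hχ
    obtain ⟨hχB, hχψ⟩ := mem_downRel.mp hχdown
    exact mem_satisfiedIn.mpr ⟨hχdown, ih χ hχB hχψ hχC⟩
  have hgw := h4 ψ hψB _ _ hdown (satisfiedIn_subset _ w) w (hg ψ hψC)
  exact (h3 ψ hψB _ (satisfiedIn_subset _ w) w (mem_langC_satisfiedIn _ w)).mpr hgw

end

theorem contextual_equivalence_general {Ap : Type} [DecidableEq Ap]
    (φ : F Ap) (B : Finset (F Ap)) (prec : F Ap → F Ap → Prop)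
    (hwf : (↑B : Set (F Ap)).WellFoundedOn prec)
    (f : Finset (F Ap) → F Ap) (g : F Ap → Finset (F Ap) → F Ap)
    (h1 : ∀ C ⊆ B, EquivUnder B C φ (f C))
    (h2 : ∀ C C' : Finset (F Ap), C ⊆ B → C' ⊆ B → C ⊆ C' → Entails (f C) (f C'))
    (h3 : ∀ ψ ∈ B, ∀ D ⊆ downRel B prec ψ, EquivUnder (downRel B prec ψ) D ψ (g ψ D))
    (h4 : ∀ ψ ∈ B, ∀ D D' : Finset (F Ap), D ⊆ D' → D' ⊆ downRel B prec ψ →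
      Entails (g ψ D) (g ψ D')) :
    Equiv φ
      (bigOr (B.powerset.toList.map fun C =>
        F.and (f C) (bigAnd (C.toList.map fun ψ => g ψ (C ∩ downRel B prec ψ))))) := by
  intro w
  have hφ := h1 _ (satisfiedIn_subset B w) w (mem_langC_satisfiedIn B w)
  simp only [sat_bigOr_map, Finset.mem_powerset, Sat, sat_bigAnd_map]
  constructor
  · refine fun hw => ⟨satisfiedIn B w, satisfiedIn_subset B w, hφ.mp hw, fun ψ hψ => ?_⟩
    obtain ⟨hψB, hwψ⟩ := mem_satisfiedIn.mp hψ
    rw [satisfiedIn_inter_of_subset (downRel_subset B prec ψ)]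
    exact (h3 ψ hψB _ (satisfiedIn_subset _ w) w (mem_langC_satisfiedIn _ w)).mp hwψ
  · rintro ⟨C, hCB, hf, hg⟩
    have hC := subset_satisfiedIn_of_sat_refinements hwf h3 h4 hCB hg
    exact hφ.mpr (h2 C _ hCB (satisfiedIn_subset B w) hC w hf)

/-- Contextual Equivalence Lemma. -/
theorem contextual_equivalence {Ap : Type} [Fintype Ap] [DecidableEq Ap]
    (φ : F Ap) (B : Finset (F Ap)) (prec : F Ap → F Ap → Prop)
    (hwf : (↑B : Set (F Ap)).WellFoundedOn prec)
    (htrans : Transitive prec) (hirrefl : Irreflexive prec)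
    (f : Finset (F Ap) → F Ap) (g : F Ap → Finset (F Ap) → F Ap)
    (h1 : ∀ C ⊆ B, EquivUnder B C φ (f C))
    (h2 : ∀ C C' : Finset (F Ap), C ⊆ B → C' ⊆ B → C ⊆ C' → Entails (f C) (f C'))
    (h3 : ∀ ψ ∈ B, ∀ D ⊆ downRel B prec ψ, EquivUnder (downRel B prec ψ) D ψ (g ψ D))
    (h4 : ∀ ψ ∈ B, ∀ D D' : Finset (F Ap), D ⊆ D' → D' ⊆ downRel B prec ψ →
      Entails (g ψ D) (g ψ D')) :
    Equiv φ
      (bigOr (B.powerset.toList.map fun C =>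
        F.and (f C) (bigAnd (C.toList.map fun ψ => g ψ (C ∩ downRel B prec ψ))))) :=
  contextual_equivalence_general φ B prec hwf f g h1 h2 h3 h4

end LTLNorm
end

section
/- Let φ be an LTL formula, let FG ψ be a basis formula in B_FG(φ), let C ⊆ ⇓ψ, let w ∈ L(C|⇓ψ), and let I be the stabilization index of w with respect to C. Then: (1) for every i ≥ I, if w_i ⊨ ψ then w_i ⊨ eval(ψ,C); and (2) for every i ≥ 0, if w_i ⊨ eval(ψ,C) then w_i ⊨ ψ. -/
namespace LTLNorm

variable {Ap : Type} [DecidableEq Ap]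

/-- The set of subformulas of a formula. -/
def sf : F Ap → Finset (F Ap)
  | F.tt => {F.tt}
  | F.ff => {F.ff}
  | F.pos a => {F.pos a}
  | F.nlit a => {F.nlit a}
  | F.and φ ψ => insert (F.and φ ψ) (sf φ ∪ sf ψ)
  | F.or φ ψ => insert (F.or φ ψ) (sf φ ∪ sf ψ)
  | F.next φ => insert (F.next φ) (sf φ)
  | F.untl φ ψ => insert (F.untl φ ψ) (sf φ ∪ sf ψ)
  | F.wuntl φ ψ => insert (F.wuntl φ ψ) (sf φ ∪ sf ψ)
  | F.rel φ ψ => insert (F.rel φ ψ) (sf φ ∪ sf ψ)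
  | F.srel φ ψ => insert (F.srel φ ψ) (sf φ ∪ sf ψ)

/-- `B_GF(φ) = { GF ψ : χ U ψ or ψ M χ is a subformula of φ }`. -/
def BGF (φ : F Ap) : Finset (F Ap) :=
  (sf φ).biUnion fun σ =>
    match σ with
    | F.untl _ ψ => {GFf ψ}
    | F.srel ψ _ => {GFf ψ}
    | _ => ∅

/-- `B_FG(φ) = { FG ψ : χ W ψ or ψ R χ is a subformula of φ }`. -/
def BFG (φ : F Ap) : Finset (F Ap) :=
  (sf φ).biUnion fun σ =>
    match σ with
    | F.wuntl _ ψ => {FGf ψ}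
    | F.rel ψ _ => {FGf ψ}
    | _ => ∅

/-- The basis `B(φ) = B_GF(φ) ∪ B_FG(φ)`. -/
def Bset (φ : F Ap) : Finset (F Ap) := BGF φ ∪ BFG φ

/-- The argument of a basis formula: `GF ψ ↦ ψ` and `FG ψ ↦ ψ`. -/
def innerArg : F Ap → F Ap
  | F.wuntl (F.untl F.tt ψ) F.ff => ψ      -- GF ψ
  | F.untl F.tt (F.wuntl ψ F.ff) => ψ      -- FG ψ
  | φ => φ

/-- `⇓ψ`: the basis formulas of `B(φ0)` strictly below `op(ψ)` in the order `≺`,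
i.e. those whose argument is a subformula of `ψ`. -/
def down (φ0 ψ : F Ap) : Finset (F Ap) :=
  (Bset φ0).filter fun χ => innerArg χ ∈ sf ψ

/-- The formula `eval(ψ, C)`. -/
def eval (C : Finset (F Ap)) : F Ap → F Ap
  | F.tt => F.tt
  | F.ff => F.ff
  | F.pos a => F.pos a
  | F.nlit a => F.nlit a
  | F.and φ ψ => F.and (eval C φ) (eval C ψ)
  | F.or φ ψ => F.or (eval C φ) (eval C ψ)
  | F.next φ => F.next (eval C φ)
  | F.wuntl φ ψ => F.wuntl (eval C φ) (eval C ψ)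
  | F.rel φ ψ => F.rel (eval C φ) (eval C ψ)
  | F.untl φ ψ => if GFf ψ ∈ C then F.wuntl (eval C φ) (eval C ψ) else F.ff
  | F.srel φ ψ => if GFf φ ∈ C then F.rel (eval C φ) (eval C ψ) else F.ff

/-- `I` is the stabilization index of `w` with respect to `C` (relative to the
basis `B`): the least `I ≥ 0` such that for every `j ≥ 0` and every formula
`GF χ ∈ B \ C`, the suffix `w_{I+j}` does not satisfy `χ`. -/
def IsStabIndex (B C : Finset (F Ap)) (w : Word Ap) (I : ℕ) : Prop :=
  (∀ (j : ℕ) (χ : F Ap), GFf χ ∈ B → GFf χ ∉ C → ¬ Sat (suff w (I + j)) χ) ∧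
  ∀ I' : ℕ, (∀ (j : ℕ) (χ : F Ap), GFf χ ∈ B → GFf χ ∉ C → ¬ Sat (suff w (I' + j)) χ) →
    I ≤ I'

/-!
Structural induction on `ψ`; `eval C` only touches the `U`- and `M`-subformulas. Beyond the
stabilization index, `ψ'` holds somewhere only if `GF ψ' ∈ C`, so a `χ U ψ'` holding there
survives in `eval C ψ`, weakened to `χ W ψ'`. Conversely, `w` satisfies every `GF ψ' ∈ C`, so
every suffix of `w` sees `ψ'` again, which upgrades that `χ W ψ'` back to `χ U ψ'`.
-/

section Semantics

variable {Ap : Type} {w : Word Ap} {a b a' b' : F Ap} {i : ℕ}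

lemma suff_suff (w : Word Ap) (i k : ℕ) : suff (suff w i) k = suff w (k + i) :=
  funext fun n => congrArg w (by omega)

lemma sat_suff_next_iff : Sat (suff w i) (F.next a) ↔ Sat (suff w (1 + i)) a := by
  rw [← suff_suff]
  rfl

lemma sat_wuntl_of_sat_untl (h : Sat w (F.untl a b)) : Sat w (F.wuntl a b) :=
  Or.inr h

lemma sat_rel_of_sat_srel (h : Sat w (F.srel a b)) : Sat w (F.rel a b) :=
  Or.inr h

lemma sat_untl_of_sat_wuntl (hb : ∃ k, Sat (suff w k) b) (h : Sat w (F.wuntl a b)) :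
    Sat w (F.untl a b) := by
  rcases h with ha | h
  · obtain ⟨k, hk⟩ := hb
    exact ⟨k, hk, fun j _ => ha j⟩
  · exact h

lemma sat_srel_of_sat_rel (ha : ∃ k, Sat (suff w k) a) (h : Sat w (F.rel a b)) :
    Sat w (F.srel a b) := by
  rcases h with hb | h
  · obtain ⟨k, hk⟩ := ha
    exact ⟨k, hk, fun j _ => hb j⟩
  · exact h

lemma sat_suff_wuntl_mono (ha : ∀ n ≥ i, Sat (suff w n) a → Sat (suff w n) a')
    (hb : ∀ n ≥ i, Sat (suff w n) b → Sat (suff w n) b')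
    (h : Sat (suff w i) (F.wuntl a b)) : Sat (suff w i) (F.wuntl a' b') := by
  simp only [Sat, suff_suff] at h ⊢
  rcases h with h | ⟨k, hk, hj⟩
  · exact Or.inl fun k => ha _ (by omega) (h k)
  · exact Or.inr ⟨k, hb _ (by omega) hk, fun j hjk => ha _ (by omega) (hj j hjk)⟩

lemma sat_suff_rel_mono (ha : ∀ n ≥ i, Sat (suff w n) a → Sat (suff w n) a')
    (hb : ∀ n ≥ i, Sat (suff w n) b → Sat (suff w n) b')
    (h : Sat (suff w i) (F.rel a b)) : Sat (suff w i) (F.rel a' b') := by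
  simp only [Sat, suff_suff] at h ⊢
  rcases h with h | ⟨k, hk, hj⟩
  · exact Or.inl fun k => hb _ (by omega) (h k)
  · exact Or.inr ⟨k, ha _ (by omega) hk, fun j hjk => hb _ (by omega) (hj j hjk)⟩

lemma exists_sat_suff_of_sat_GFf (h : Sat w (GFf b)) (i : ℕ) :
    ∃ k, Sat (suff (suff w i) k) b := by
  rcases h with h | ⟨_, h, _⟩
  · obtain ⟨k, hk, -⟩ := h i
    exact ⟨k, hk⟩
  · exact h.elim

def StableFrom (B C : Finset (F Ap)) (w : Word Ap) (I : ℕ) : Prop :=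
  ∀ b, GFf b ∈ B → ∀ n, I ≤ n → Sat (suff w n) b → GFf b ∈ C

lemma StableFrom.mono {B B' C : Finset (F Ap)} {I : ℕ} (hB : B' ⊆ B)
    (h : StableFrom B C w I) : StableFrom B' C w I :=
  fun b hb => h b (hB hb)

end Semantics

lemma IsStabIndex.stableFrom {B C : Finset (F Ap)} {w : Word Ap} {I : ℕ}
    (h : IsStabIndex B C w I) : StableFrom B C w I := by
  intro b hb n hn hsat
  by_contra hbC
  exact h.1 (n - I) b hb hbC (by rwa [Nat.add_sub_cancel' hn])

lemma mem_sf_self (χ : F Ap) : χ ∈ sf χ := by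
  cases χ <;> simp [sf]

lemma sf_subset_of_mem {χ ψ : F Ap} (h : χ ∈ sf ψ) : sf χ ⊆ sf ψ := by
  induction ψ with
  | tt | ff | pos | nlit => simp only [sf, Finset.mem_singleton] at h; subst h; rfl
  | next a ih =>
    simp only [sf, Finset.mem_insert] at h
    rcases h with rfl | h
    · rfl
    · exact (ih h).trans (Finset.subset_insert _ _)
  | and a b iha ihb | or a b iha ihb | untl a b iha ihb | wuntl a b iha ihb
  | rel a b iha ihb | srel a b iha ihb =>
    simp only [sf, Finset.mem_insert, Finset.mem_union] at h
    rcases h with rfl | h | h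
    · rfl
    · exact (iha h).trans (Finset.subset_union_left.trans (Finset.subset_insert _ _))
    · exact (ihb h).trans (Finset.subset_union_right.trans (Finset.subset_insert _ _))

lemma BGF_subset_of_mem_sf {χ ψ : F Ap} (h : χ ∈ sf ψ) : BGF χ ⊆ BGF ψ :=
  Finset.biUnion_subset_biUnion_of_subset_left _ (sf_subset_of_mem h)

lemma GFf_mem_BGF_untl (a b : F Ap) : GFf b ∈ BGF (F.untl a b) :=
  Finset.mem_biUnion.2 ⟨_, mem_sf_self _, by simp⟩

lemma GFf_mem_BGF_srel (a b : F Ap) : GFf a ∈ BGF (F.srel a b) :=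
  Finset.mem_biUnion.2 ⟨_, mem_sf_self _, by simp⟩

lemma exists_GFf_of_mem_BGF {χ ψ : F Ap} (h : χ ∈ BGF ψ) : ∃ b ∈ sf ψ, χ = GFf b := by
  obtain ⟨σ, hσ, hχσ⟩ := Finset.mem_biUnion.1 h
  cases σ <;> simp only [Finset.mem_singleton, Finset.notMem_empty] at hχσ
  all_goals exact ⟨_, sf_subset_of_mem hσ (by simp [sf, mem_sf_self]), hχσ⟩

lemma mem_sf_of_FGf_mem_BFG {φ ψ : F Ap} (h : FGf ψ ∈ BFG φ) : ψ ∈ sf φ := by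
  obtain ⟨σ, hσ, hψσ⟩ := Finset.mem_biUnion.1 h
  cases σ <;> simp only [FGf, Ff, Gf, Finset.mem_singleton, Finset.notMem_empty, F.untl.injEq,
    F.wuntl.injEq, and_true, true_and] at hψσ
  all_goals
    subst hψσ
    exact sf_subset_of_mem hσ (by simp [sf, mem_sf_self])

lemma BGF_subset_down {φ ψ : F Ap} (h : ψ ∈ sf φ) : BGF ψ ⊆ down φ ψ := by
  intro χ hχ
  obtain ⟨b, hb, rfl⟩ := exists_GFf_of_mem_BGF hχ
  refine Finset.mem_filter.2 ⟨Finset.mem_union_left _ (BGF_subset_of_mem_sf h hχ), ?_⟩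
  simpa only [innerArg, GFf, Gf, Ff] using hb

theorem sat_eval_of_sat {C : Finset (F Ap)} {w : Word Ap} {I : ℕ} (χ : F Ap)
    (hχ : StableFrom (BGF χ) C w I) (i : ℕ) (hi : I ≤ i) (h : Sat (suff w i) χ) :
    Sat (suff w i) (eval C χ) := by
  have sub : ∀ {c d : F Ap}, c ∈ sf d → StableFrom (BGF d) C w I → StableFrom (BGF c) C w I :=
    fun hcd => StableFrom.mono (BGF_subset_of_mem_sf hcd)
  induction χ generalizing i with
  | tt | ff | pos | nlit => exact h
  | and a b iha ihb =>
    exact ⟨iha (sub (by simp [sf, mem_sf_self]) hχ) i hi h.1,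
      ihb (sub (by simp [sf, mem_sf_self]) hχ) i hi h.2⟩
  | or a b iha ihb =>
    exact h.imp (iha (sub (by simp [sf, mem_sf_self]) hχ) i hi)
      (ihb (sub (by simp [sf, mem_sf_self]) hχ) i hi)
  | next a ih =>
    simp only [eval, sat_suff_next_iff] at h ⊢
    exact ih (sub (by simp [sf, mem_sf_self]) hχ) _ (by omega) h
  | wuntl a b iha ihb =>
    have ha := iha (sub (by simp [sf, mem_sf_self]) hχ)
    have hb := ihb (sub (by simp [sf, mem_sf_self]) hχ)
    exact sat_suff_wuntl_mono (fun n hn => ha n (hi.trans hn)) (fun n hn => hb n (hi.trans hn)) h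
  | rel a b iha ihb =>
    have ha := iha (sub (by simp [sf, mem_sf_self]) hχ)
    have hb := ihb (sub (by simp [sf, mem_sf_self]) hχ)
    exact sat_suff_rel_mono (fun n hn => ha n (hi.trans hn)) (fun n hn => hb n (hi.trans hn)) h
  | untl a b iha ihb =>
    have ha := iha (sub (by simp [sf, mem_sf_self]) hχ)
    have hb := ihb (sub (by simp [sf, mem_sf_self]) hχ)
    obtain ⟨k, hk, -⟩ := id h
    have hbC : GFf b ∈ C :=
      hχ b (GFf_mem_BGF_untl a b) (k + i) (by omega) (by rwa [← suff_suff])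
    rw [eval, if_pos hbC]
    exact sat_suff_wuntl_mono (fun n hn => ha n (hi.trans hn)) (fun n hn => hb n (hi.trans hn))
      (sat_wuntl_of_sat_untl h)
  | srel a b iha ihb =>
    have ha := iha (sub (by simp [sf, mem_sf_self]) hχ)
    have hb := ihb (sub (by simp [sf, mem_sf_self]) hχ)
    obtain ⟨k, hk, -⟩ := id h
    have haC : GFf a ∈ C :=
      hχ a (GFf_mem_BGF_srel a b) (k + i) (by omega) (by rwa [← suff_suff])
    rw [eval, if_pos haC]
    exact sat_suff_rel_mono (fun n hn => ha n (hi.trans hn)) (fun n hn => hb n (hi.trans hn))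
      (sat_rel_of_sat_srel h)

theorem sat_of_sat_eval {C : Finset (F Ap)} {w : Word Ap} (hC : ∀ χ ∈ C, Sat w χ) (χ : F Ap)
    (i : ℕ) (h : Sat (suff w i) (eval C χ)) : Sat (suff w i) χ := by
  induction χ generalizing i with
  | tt | ff | pos | nlit => exact h
  | and a b iha ihb => exact ⟨iha i h.1, ihb i h.2⟩
  | or a b iha ihb => exact h.imp (iha i) (ihb i)
  | next a ih =>
    simp only [eval, sat_suff_next_iff] at h ⊢
    exact ih _ h
  | wuntl a b iha ihb => exact sat_suff_wuntl_mono (fun n _ => iha n) (fun n _ => ihb n) h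
  | rel a b iha ihb => exact sat_suff_rel_mono (fun n _ => iha n) (fun n _ => ihb n) h
  | untl a b iha ihb =>
    by_cases hb : GFf b ∈ C
    · rw [eval, if_pos hb] at h
      exact sat_untl_of_sat_wuntl (exists_sat_suff_of_sat_GFf (hC _ hb) i)
        (sat_suff_wuntl_mono (fun n _ => iha n) (fun n _ => ihb n) h)
    · rw [eval, if_neg hb] at h
      exact h.elim
  | srel a b iha ihb =>
    by_cases ha : GFf a ∈ C
    · rw [eval, if_pos ha] at h
      exact sat_srel_of_sat_rel (exists_sat_suff_of_sat_GFf (hC _ ha) i)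
        (sat_suff_rel_mono (fun n _ => iha n) (fun n _ => ihb n) h)
    · rw [eval, if_neg ha] at h
      exact h.elim

theorem eval_technical_lemma_general {Ap : Type} [DecidableEq Ap]
    (φ ψ : F Ap) (hψ : FGf ψ ∈ BFG φ) (C : Finset (F Ap))
    (w : Word Ap) (hw : w ∈ LangC (down φ ψ) C) (I : ℕ)
    (hI : IsStabIndex (down φ ψ) C w I) :
    (∀ i : ℕ, I ≤ i → Sat (suff w i) ψ → Sat (suff w i) (eval C ψ)) ∧
    (∀ i : ℕ, Sat (suff w i) (eval C ψ) → Sat (suff w i) ψ) := by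
  have hstable : StableFrom (BGF ψ) C w I :=
    hI.stableFrom.mono (BGF_subset_down (mem_sf_of_FGf_mem_BFG hψ))
  exact ⟨sat_eval_of_sat ψ hstable, sat_of_sat_eval hw.1 ψ⟩

/-- relation between `ψ` and `eval(ψ,C)` beyond the stabilization
index, for a basis formula `FG ψ ∈ B_FG(φ)`. -/
theorem eval_technical_lemma {Ap : Type} [Fintype Ap] [DecidableEq Ap]
    (φ ψ : F Ap) (hψ : FGf ψ ∈ BFG φ) (C : Finset (F Ap)) (hC : C ⊆ down φ ψ)
    (w : Word Ap) (hw : w ∈ LangC (down φ ψ) C) (I : ℕ)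
    (hI : IsStabIndex (down φ ψ) C w I) :
    (∀ i : ℕ, I ≤ i → Sat (suff w i) ψ → Sat (suff w i) (eval C ψ)) ∧
    (∀ i : ℕ, Sat (suff w i) (eval C ψ) → Sat (suff w i) ψ) :=
  eval_technical_lemma_general φ ψ hψ C w hw I hI

end LTLNorm
end

section
/- For all extended LTL formulas with placeholders φ₁, φ₂ and all formulas ψ₁, ψ₂: (1) φ₁ W φ₂[ψ₁ U ψ₂] ≡ (φ₁ U φ₂[ψ₁ U ψ₂]) ∨ G φ₁; (2) φ₁[ψ₁ U ψ₂] W φ₂ ≡ (GF ψ₂ ∧ (φ₁[ψ₁ W ψ₂] W φ₂)) ∨ (φ₁[ψ₁ U ψ₂] U (φ₂ ∨ G φ₁[ff])). -/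
/-! Part (1) is the unfolding `φ W ψ ≡ φ U ψ ∨ G φ`, valid for every `ψ`.

For part (2): substituting into a formula with positive placeholders is monotone, even when
the two substituted formulas are only comparable on a suffix-closed set of words. On words
satisfying `GF ψ₂` the formulas `ψ₁ W ψ₂` and `ψ₁ U ψ₂` agree, and on words never satisfying
`ψ₂` the formula `ψ₁ U ψ₂` is `ff`. So if `φ₁[ψ₁ U ψ₂]` holds forever, then either `GF ψ₂`
holds, or `G φ₁[ff]` holds after the last occurrence of `ψ₂`. -/

namespace ExtLTL

/-- Extended LTL formulas, with the limit operators `GF` and `FG` as atomic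
operators. -/
inductive E (Ap : Type) : Type
  | tt    : E Ap
  | ff    : E Ap
  | pos   : Ap → E Ap
  | nlit  : Ap → E Ap
  | and   : E Ap → E Ap → E Ap
  | or    : E Ap → E Ap → E Ap
  | next  : E Ap → E Ap
  | untl  : E Ap → E Ap → E Ap
  | wuntl : E Ap → E Ap → E Ap
  | gf    : E Ap → E Ap
  | fg    : E Ap → E Ap
  deriving DecidableEq

/-- Infinite words over the alphabet `2^Ap`. -/
abbrev Word (Ap : Type) := ℕ → Set Ap

/-- Suffix of a word starting at position `i`. -/
def suff {Ap : Type} (w : Word Ap) (i : ℕ) : Word Ap := fun n => w (n + i)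

/-- Satisfaction relation for extended LTL. -/
def Sat {Ap : Type} : Word Ap → E Ap → Prop
  | _, E.tt => True
  | _, E.ff => False
  | w, E.pos a => a ∈ w 0
  | w, E.nlit a => a ∉ w 0
  | w, E.and φ ψ => Sat w φ ∧ Sat w ψ
  | w, E.or φ ψ => Sat w φ ∨ Sat w ψ
  | w, E.next φ => Sat (suff w 1) φ
  | w, E.untl φ ψ => ∃ k, Sat (suff w k) ψ ∧ ∀ j < k, Sat (suff w j) φ
  | w, E.wuntl φ ψ => (∀ k, Sat (suff w k) φ) ∨ ∃ k, Sat (suff w k) ψ ∧ ∀ j < k, Sat (suff w j) φ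
  | w, E.gf φ => ∀ i : ℕ, ∃ j : ℕ, i ≤ j ∧ Sat (suff w j) φ
  | w, E.fg φ => ∃ i : ℕ, ∀ j : ℕ, i ≤ j → Sat (suff w j) φ

/-- Equivalence of extended LTL formulas. -/
def Equiv {Ap : Type} (φ ψ : E Ap) : Prop := ∀ w : Word Ap, Sat w φ ↔ Sat w ψ

/-- G φ := φ W ff. -/
def Gf {Ap : Type} (φ : E Ap) : E Ap := E.wuntl φ E.ff

/-- Number of nodes of the syntax tree. -/
def size {Ap : Type} : E Ap → ℕ
  | E.tt => 1
  | E.ff => 1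
  | E.pos _ => 1
  | E.nlit _ => 1
  | E.and φ ψ => size φ + size ψ + 1
  | E.or φ ψ => size φ + size ψ + 1
  | E.next φ => size φ + 1
  | E.untl φ ψ => size φ + size ψ + 1
  | E.wuntl φ ψ => size φ + size ψ + 1
  | E.gf φ => size φ + 1
  | E.fg φ => size φ + 1

/-- Formulas with placeholders: extended LTL formulas over `Option Ap`, where
the extra atomic proposition `pos none` is the placeholder `[·]`. -/
abbrev EP (Ap : Type) := E (Option Ap)

/-- The placeholder occurs only positively (never negated). -/
def posOnly {Ap : Type} : EP Ap → Prop
  | E.nlit none => False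
  | E.and φ ψ => posOnly φ ∧ posOnly ψ
  | E.or φ ψ => posOnly φ ∧ posOnly ψ
  | E.next φ => posOnly φ
  | E.untl φ ψ => posOnly φ ∧ posOnly ψ
  | E.wuntl φ ψ => posOnly φ ∧ posOnly ψ
  | E.gf φ => posOnly φ
  | E.fg φ => posOnly φ
  | _ => True

/-- `subst φ ψ = φ[ψ]`: substitute `ψ` for every occurrence of the placeholder
in `φ`. -/
def subst {Ap : Type} : EP Ap → E Ap → E Ap
  | E.tt, _ => E.tt
  | E.ff, _ => E.ff
  | E.pos none, ψ => ψ
  | E.pos (some a), _ => E.pos a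
  | E.nlit none, _ => E.ff    -- never occurs in a formula with positive placeholders
  | E.nlit (some a), _ => E.nlit a
  | E.and φ₁ φ₂, ψ => E.and (subst φ₁ ψ) (subst φ₂ ψ)
  | E.or φ₁ φ₂, ψ => E.or (subst φ₁ ψ) (subst φ₂ ψ)
  | E.next φ, ψ => E.next (subst φ ψ)
  | E.untl φ₁ φ₂, ψ => E.untl (subst φ₁ ψ) (subst φ₂ ψ)
  | E.wuntl φ₁ φ₂, ψ => E.wuntl (subst φ₁ ψ) (subst φ₂ ψ)
  | E.gf φ, ψ => E.gf (subst φ ψ)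
  | E.fg φ, ψ => E.fg (subst φ ψ)

section

variable {Ap : Type}

lemma suff_suff (w : Word Ap) (i j : ℕ) : suff (suff w i) j = suff w (j + i) := by
  funext n; simp only [suff, Nat.add_assoc]

lemma sat_Gf {w : Word Ap} {φ : E Ap} : Sat w (Gf φ) ↔ ∀ k, Sat (suff w k) φ := by
  simp [Gf, Sat]

lemma sat_gf_suff {w : Word Ap} {φ : E Ap} (h : Sat w (E.gf φ)) (k : ℕ) :
    Sat (suff w k) (E.gf φ) := by
  intro i
  obtain ⟨j, hij, hj⟩ := h (i + k)
  refine ⟨j - k, by omega, ?_⟩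
  rwa [suff_suff, Nat.sub_add_cancel (by omega)]

lemma exists_forall_not_sat_suff_of_not_sat_gf {w : Word Ap} {φ : E Ap}
    (h : ¬ Sat w (E.gf φ)) : ∃ i, ∀ m, ¬ Sat (suff (suff w i) m) φ := by
  simp only [Sat, not_forall, not_exists, not_and] at h
  obtain ⟨i, hi⟩ := h
  exact ⟨i, fun m => by rw [suff_suff]; exact hi _ (by omega)⟩

lemma forall_not_sat_suff_suff {v : Word Ap} {φ : E Ap} (h : ∀ m, ¬ Sat (suff v m) φ) (k : ℕ) :
    ∀ m, ¬ Sat (suff (suff v k) m) φ := by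
  intro m
  rw [suff_suff]
  exact h (m + k)

theorem sat_subst_mono_on (P : Word Ap → Prop) (hP : ∀ v k, P v → P (suff v k))
    {ψ ψ' : E Ap} (h : ∀ v, P v → Sat v ψ → Sat v ψ') {φ : EP Ap} (hφ : posOnly φ)
    {v : Word Ap} (hv : P v) : Sat v (subst φ ψ) → Sat v (subst φ ψ') := by
  induction φ generalizing v with
  | pos a =>
    cases a
    exacts [h v hv, id]
  | nlit a =>
    cases a
    exacts [hφ.elim, id]
  | tt | ff => exact id
  | and φ₁ φ₂ ih₁ ih₂ => exact And.imp (ih₁ hφ.1 hv) (ih₂ hφ.2 hv)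
  | or φ₁ φ₂ ih₁ ih₂ => exact Or.imp (ih₁ hφ.1 hv) (ih₂ hφ.2 hv)
  | next φ ih => exact ih hφ (hP v 1 hv)
  | untl φ₁ φ₂ ih₁ ih₂ =>
    rintro ⟨k, hk, hj⟩
    exact ⟨k, ih₂ hφ.2 (hP v k hv) hk, fun j hjk => ih₁ hφ.1 (hP v j hv) (hj j hjk)⟩
  | wuntl φ₁ φ₂ ih₁ ih₂ =>
    rintro (hall | ⟨k, hk, hj⟩)
    · exact Or.inl fun k => ih₁ hφ.1 (hP v k hv) (hall k)
    · exact Or.inr ⟨k, ih₂ hφ.2 (hP v k hv) hk,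
        fun j hjk => ih₁ hφ.1 (hP v j hv) (hj j hjk)⟩
  | gf φ ih =>
    intro hs i
    obtain ⟨j, hij, hj⟩ := hs i
    exact ⟨j, hij, ih hφ (hP v j hv) hj⟩
  | fg φ ih =>
    rintro ⟨i, hi⟩
    exact ⟨i, fun j hij => ih hφ (hP v j hv) (hi j hij)⟩

theorem sat_subst_mono {ψ ψ' : E Ap} (h : ∀ v, Sat v ψ → Sat v ψ') {φ : EP Ap}
    (hφ : posOnly φ) {v : Word Ap} : Sat v (subst φ ψ) → Sat v (subst φ ψ') :=
  sat_subst_mono_on (fun _ => True) (fun _ _ _ => trivial) (fun v _ => h v) hφ trivial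

theorem sat_subst_untl_of_sat_gf {ψ₁ ψ₂ : E Ap} {φ : EP Ap} (hφ : posOnly φ) {v : Word Ap}
    (hv : Sat v (E.gf ψ₂)) :
    Sat v (subst φ (E.wuntl ψ₁ ψ₂)) → Sat v (subst φ (E.untl ψ₁ ψ₂)) := by
  refine sat_subst_mono_on (Sat · (E.gf ψ₂)) (fun u k hu => sat_gf_suff hu k) ?_ hφ hv
  rintro u hu (hall | huntl)
  · obtain ⟨k, -, hk⟩ := hu 0
    exact ⟨k, hk, fun j _ => hall j⟩
  · exact huntl

theorem sat_subst_ff_of_forall_not_sat {ψ₁ ψ₂ : E Ap} {φ : EP Ap} (hφ : posOnly φ)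
    {v : Word Ap} (hv : ∀ m, ¬ Sat (suff v m) ψ₂) :
    Sat v (subst φ (E.untl ψ₁ ψ₂)) → Sat v (subst φ E.ff) := by
  refine sat_subst_mono_on (fun u => ∀ m, ¬ Sat (suff u m) ψ₂) ?_ ?_ hφ hv
  · exact fun u k hu => forall_not_sat_suff_suff hu k
  · rintro u hu ⟨m, hm, -⟩
    exact hu m hm

theorem wuntl_equiv_or_untl_Gf (φ ψ : E Ap) :
    Equiv (E.wuntl φ ψ) (E.or (E.untl φ ψ) (Gf φ)) := by
  intro w
  simp only [Sat, Gf, false_and, exists_false, or_false]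
  exact or_comm

theorem wuntl_subst_untl_equiv {φ₁ : EP Ap} (hφ₁ : posOnly φ₁) (φ₂ ψ₁ ψ₂ : E Ap) :
    Equiv (E.wuntl (subst φ₁ (E.untl ψ₁ ψ₂)) φ₂)
      (E.or (E.and (E.gf ψ₂) (E.wuntl (subst φ₁ (E.wuntl ψ₁ ψ₂)) φ₂))
        (E.untl (subst φ₁ (E.untl ψ₁ ψ₂)) (E.or φ₂ (Gf (subst φ₁ E.ff))))) := by
  intro w
  constructor
  · rintro (hall | ⟨k, hk, hj⟩)
    · by_cases hgf : Sat w (E.gf ψ₂)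
      · exact Or.inl ⟨hgf, Or.inl fun k => sat_subst_mono (fun _ => Or.inr) hφ₁ (hall k)⟩
      · obtain ⟨i, hi⟩ := exists_forall_not_sat_suff_of_not_sat_gf hgf
        refine Or.inr ⟨i, Or.inr (sat_Gf.2 fun k => ?_), fun j _ => hall j⟩
        refine sat_subst_ff_of_forall_not_sat (ψ₁ := ψ₁) hφ₁ (forall_not_sat_suff_suff hi k) ?_
        rw [suff_suff]
        exact hall (k + i)
    · exact Or.inr ⟨k, Or.inl hk, hj⟩
  · rintro (⟨hgf, hall | ⟨k, hk, hj⟩⟩ | ⟨k, hk | hG, hj⟩)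
    · exact Or.inl fun k => sat_subst_untl_of_sat_gf hφ₁ (sat_gf_suff hgf k) (hall k)
    · exact Or.inr ⟨k, hk,
        fun j hjk => sat_subst_untl_of_sat_gf hφ₁ (sat_gf_suff hgf j) (hj j hjk)⟩
    · exact Or.inr ⟨k, hk, hj⟩
    · refine Or.inl fun m => ?_
      rcases lt_or_ge m k with hmk | hkm
      · exact hj m hmk
      · have hff := sat_Gf.1 hG (m - k)
        rw [suff_suff, Nat.sub_add_cancel hkm] at hff
        exact sat_subst_mono (fun _ => False.elim) hφ₁ hff

end

theorem pull_U_out_of_W_general {Ap : Type} :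
    -- (1)  φ₁ W φ₂[ψ₁ U ψ₂]  ≡  (φ₁ U φ₂[ψ₁ U ψ₂]) ∨ G φ₁
    (∀ (φ₁ : E Ap) (φ₂ : EP Ap), posOnly φ₂ → ∀ ψ₁ ψ₂ : E Ap,
      Equiv (E.wuntl φ₁ (subst φ₂ (E.untl ψ₁ ψ₂)))
            (E.or (E.untl φ₁ (subst φ₂ (E.untl ψ₁ ψ₂))) (Gf φ₁))) ∧
    -- (2)  φ₁[ψ₁ U ψ₂] W φ₂ ≡ (GF ψ₂ ∧ (φ₁[ψ₁ W ψ₂] W φ₂)) ∨ (φ₁[ψ₁ U ψ₂] U (φ₂ ∨ G φ₁[ff]))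
    (∀ (φ₁ : EP Ap) (φ₂ : E Ap), posOnly φ₁ → ∀ ψ₁ ψ₂ : E Ap,
      Equiv (E.wuntl (subst φ₁ (E.untl ψ₁ ψ₂)) φ₂)
            (E.or
              (E.and (E.gf ψ₂) (E.wuntl (subst φ₁ (E.wuntl ψ₁ ψ₂)) φ₂))
              (E.untl (subst φ₁ (E.untl ψ₁ ψ₂)) (E.or φ₂ (Gf (subst φ₁ E.ff)))))) :=
  ⟨fun φ₁ _ _ _ _ => wuntl_equiv_or_untl_Gf φ₁ _,
    fun _ φ₂ hφ₁ ψ₁ ψ₂ => wuntl_subst_untl_equiv hφ₁ φ₂ ψ₁ ψ₂⟩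

/-- pulling `U`-subformulas out of `W`-formulas. -/
theorem pull_U_out_of_W {Ap : Type} [Fintype Ap] :
    -- (1)  φ₁ W φ₂[ψ₁ U ψ₂]  ≡  (φ₁ U φ₂[ψ₁ U ψ₂]) ∨ G φ₁
    (∀ (φ₁ : E Ap) (φ₂ : EP Ap), posOnly φ₂ → ∀ ψ₁ ψ₂ : E Ap,
      Equiv (E.wuntl φ₁ (subst φ₂ (E.untl ψ₁ ψ₂)))
            (E.or (E.untl φ₁ (subst φ₂ (E.untl ψ₁ ψ₂))) (Gf φ₁))) ∧
    -- (2)  φ₁[ψ₁ U ψ₂] W φ₂ ≡ (GF ψ₂ ∧ (φ₁[ψ₁ W ψ₂] W φ₂)) ∨ (φ₁[ψ₁ U ψ₂] U (φ₂ ∨ G φ₁[ff]))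
    (∀ (φ₁ : EP Ap) (φ₂ : E Ap), posOnly φ₁ → ∀ ψ₁ ψ₂ : E Ap,
      Equiv (E.wuntl (subst φ₁ (E.untl ψ₁ ψ₂)) φ₂)
            (E.or
              (E.and (E.gf ψ₂) (E.wuntl (subst φ₁ (E.wuntl ψ₁ ψ₂)) φ₂))
              (E.untl (subst φ₁ (E.untl ψ₁ ψ₂)) (E.or φ₂ (Gf (subst φ₁ E.ff)))))) :=
  pull_U_out_of_W_general

end ExtLTL
end
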